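/- arXiv:2004.05106 — 4 statements merged into one kernel-verified Lean document; each statement's English description precedes it below -/
import Mathlib

section
/- The MoveFrom rule preserves well-formedness: let σ = ⟨M,G,L, ⟨a,U⟩::S⟩ be a well-formed state where a ∈ 𝓐 is an address, s ∈ 𝓣 is a resource type, G(⟨a,s⟩) = c, and M(c) = tv'. Then the state ⟨M with c deleted, G with ⟨a,s⟩ deleted, L, tv'::S⟩ is well-formed. -/
namespace MoveSem

/-- Tags: either the non-resource tag `U` or a resource tag drawn from `RTag`. -/
inductive MTag (RTag : Type) : Type where
  | U : MTag RTag
  | res : RTag → MTag RTag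

/-- Values: primitive values, or record values.  A record value is a non-empty finite
partial function from field names to tagged values, represented as an association
list (non-emptiness and distinctness of field names are imposed in the
well-formedness predicates below). -/
inductive Val (Prim Fld RTag : Type) : Type where
  | prim : Prim → Val Prim Fld RTag
  | record : List (Fld × (Val Prim Fld RTag × MTag RTag)) → Val Prim Fld RTag

/-- Tagged values: a value paired with a tag. -/
abbrev TVal (Prim Fld RTag : Type) : Type := Val Prim Fld RTag × MTag RTag

variable {Loc Prim Var Fld RTag Ty : Type}

/-- Lookup in an association list (the partial-function reading of a record). -/
def lookupF {α : Type} [DecidableEq Fld] : List (Fld × α) → Fld → Option α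
  | [], _ => none
  | (g, a) :: rest, f => if g = f then some a else lookupF rest f

/-- The subterm `tv[p]` of a tagged value located at path `p`. -/
def subTV [DecidableEq Fld] : TVal Prim Fld RTag → List Fld → Option (TVal Prim Fld RTag)
  | tv, [] => some tv
  | (Val.record flds, _), f :: p =>
    match lookupF flds f with
    | some tv' => subTV tv' p
    | none => none
  | (Val.prim _, _), _ :: _ => none

/-- The replacement `tv[p := tv']` of the subterm at path `p` by `tv'`. -/
def setSubTV [DecidableEq Fld] : TVal Prim Fld RTag → List Fld → TVal Prim Fld RTag →
    Option (TVal Prim Fld RTag)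
  | _, [], tv' => some tv'
  | (Val.record flds, t), f :: p, tv' =>
    match lookupF flds f with
    | some tvf =>
      match setSubTV tvf p tv' with
      | some tvf' =>
        some (Val.record (flds.map fun ft => if ft.1 = f then (ft.1, tvf') else ft), t)
      | none => none
    | none => none
  | (Val.prim _, _), _ :: _, _ => none

/-- A tagged value is a *resource* when the type of its value is a resource type. -/
def IsRes (typeOf : Val Prim Fld RTag → Ty) (ResTy : Set Ty) (tv : TVal Prim Fld RTag) : Prop :=
  typeOf tv.1 ∈ ResTy

/-- Well-formed tagged values: the tag is a resource tag iff the type is a resource type,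
and either the value is primitive, or it is a (non-empty, duplicate-free) record value all
of whose field values are well-formed and, in case the type is not a resource type, none of
whose field values is a resource. -/
inductive WFTV (typeOf : Val Prim Fld RTag → Ty) (ResTy : Set Ty) :
    TVal Prim Fld RTag → Prop where
  | prim (p : Prim) (t : MTag RTag)
      (hiff : typeOf (Val.prim p) ∈ ResTy ↔ t ≠ MTag.U) :
      WFTV typeOf ResTy (Val.prim p, t)
  | record (flds : List (Fld × TVal Prim Fld RTag)) (t : MTag RTag)
      (hne : flds ≠ [])
      (hnodup : (flds.map Prod.fst).Nodup)
      (hwf : ∀ f tv, (f, tv) ∈ flds → WFTV typeOf ResTy tv)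
      (hiff : typeOf (Val.record flds) ∈ ResTy ↔ t ≠ MTag.U)
      (hnores : typeOf (Val.record flds) ∉ ResTy →
        ∀ f tv, (f, tv) ∈ flds → ¬ IsRes typeOf ResTy tv) :
      WFTV typeOf ResTy (Val.record flds, t)

/-- References: a location, a path, and a mutability qualifier (`true` = mut). -/
structure MRef (Loc Fld : Type) : Type where
  loc : Loc
  path : List Fld
  mutq : Bool

/-- Stack values: tagged values, references, or (for `Branch`) locations. -/
abbrev SVal (Loc Prim Fld RTag : Type) : Type :=
  TVal Prim Fld RTag ⊕ (MRef Loc Fld ⊕ Loc)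

def SV.tv (tv : TVal Prim Fld RTag) : SVal Loc Prim Fld RTag := Sum.inl tv
def SV.ref (r : MRef Loc Fld) : SVal Loc Prim Fld RTag := Sum.inr (Sum.inl r)
def SV.loc (c : Loc) : SVal Loc Prim Fld RTag := Sum.inr (Sum.inr c)

/-- States: a memory, a global store, a local map, and an operand stack. -/
structure MState (Loc Prim Var Fld RTag Ty : Type) : Type where
  M : Loc → Option (TVal Prim Fld RTag)
  G : Prim × Ty → Option Loc
  L : Var → Option (Loc ⊕ MRef Loc Fld)
  S : List (SVal Loc Prim Fld RTag)

/-- Update (or delete, with `b = none`) a binding of a partial map. -/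
def upd {α β : Type} [DecidableEq α] (f : α → Option β) (a : α) (b : Option β) :
    α → Option β :=
  fun x => if x = a then b else f x

/-- Globally consistent states. -/
structure GloballyConsistent (typeOf : Val Prim Fld RTag → Ty) (ResTy : Set Ty)
    (σ : MState Loc Prim Var Fld RTag Ty) : Prop where
  wf_mem : ∀ c tv, σ.M c = some tv → WFTV typeOf ResTy tv
  wf_stack : ∀ tv, SV.tv tv ∈ σ.S → WFTV typeOf ResTy tv
  dom_eq : ∀ c, (∃ tv, σ.M c = some tv) ↔
    ((∃ g, σ.G g = some c) ∨ (∃ x, σ.L x = some (Sum.inl c)))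
  glob_ty : ∀ a s c, σ.G (a, s) = some c → ∃ v t, σ.M c = some (v, t) ∧ typeOf v = s

/-- Tag-consistent states: each resource tag occurs at most once among subterms of
memory values and stack entries. -/
structure TagConsistent [DecidableEq Fld] (σ : MState Loc Prim Var Fld RTag Ty) : Prop where
  mem_mem : ∀ c₁ c₂ tv₁ tv₂ p₁ p₂ v₁ v₂ t, σ.M c₁ = some tv₁ → σ.M c₂ = some tv₂ →
    subTV tv₁ p₁ = some (v₁, MTag.res t) → subTV tv₂ p₂ = some (v₂, MTag.res t) →
    c₁ = c₂ ∧ p₁ = p₂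
  stack_stack : ∀ (i₁ i₂ : ℕ) tv₁ tv₂ p₁ p₂ v₁ v₂ t,
    σ.S[i₁]? = some (SV.tv tv₁) → σ.S[i₂]? = some (SV.tv tv₂) →
    subTV tv₁ p₁ = some (v₁, MTag.res t) → subTV tv₂ p₂ = some (v₂, MTag.res t) →
    i₁ = i₂ ∧ p₁ = p₂
  mem_stack : ∀ c tv (i : ℕ) tv' p₁ p₂ v₁ v₂ t, σ.M c = some tv → σ.S[i]? = some (SV.tv tv') →
    subTV tv p₁ = some (v₁, MTag.res t) → subTV tv' p₂ = some (v₂, MTag.res t) → False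

/-- Non-aliasing states. -/
structure NonAliasing (σ : MState Loc Prim Var Fld RTag Ty) : Prop where
  locals : ∀ x₁ x₂ c, x₁ ≠ x₂ → σ.L x₁ = some (Sum.inl c) → σ.L x₂ = some (Sum.inl c) → False
  globals : ∀ g₁ g₂ c, g₁ ≠ g₂ → σ.G g₁ = some c → σ.G g₂ = some c → False
  glob_loc : ∀ g x c, σ.G g = some c → σ.L x = some (Sum.inl c) → False

/-- Well-formed states. -/
structure WFState [DecidableEq Fld] (typeOf : Val Prim Fld RTag → Ty) (ResTy : Set Ty)
    (σ : MState Loc Prim Var Fld RTag Ty) : Prop where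
  gc : GloballyConsistent typeOf ResTy σ
  tc : TagConsistent σ
  na : NonAliasing σ

/-- The resource tags of a state: tags occurring on some subterm of a value in the
image of the memory or of a tagged value on the stack. -/
def resources [DecidableEq Fld] (σ : MState Loc Prim Var Fld RTag Ty) : Set RTag :=
  { t | (∃ c tv p v, σ.M c = some tv ∧ subTV tv p = some (v, MTag.res t)) ∨
        (∃ tv, SV.tv tv ∈ σ.S ∧ ∃ p v, subTV tv p = some (v, MTag.res t)) }

/-- The `MoveFrom` rule preserves well-formedness. -/
theorem movefrom_preserves_wf {Loc Prim Var Fld RTag Ty : Type}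
    [DecidableEq Loc] [DecidableEq Prim] [DecidableEq Var] [DecidableEq Fld] [DecidableEq Ty]
    [Countable Loc] [Countable Prim] [Countable Var] [Countable RTag] [Finite Fld]
    (typeOf : Val Prim Fld RTag → Ty) (ResTy : Set Ty) (Addr : Set Prim)
    (M : Loc → Option (TVal Prim Fld RTag)) (G : Prim × Ty → Option Loc)
    (L : Var → Option (Loc ⊕ MRef Loc Fld)) (S : List (SVal Loc Prim Fld RTag))
    (a : Prim) (s : Ty) (c : Loc) (tv' : TVal Prim Fld RTag)
    (hwf : WFState typeOf ResTy (MState.mk M G L (SV.tv (Val.prim a, MTag.U) :: S)))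
    (ha : a ∈ Addr) (hs : s ∈ ResTy) (hG : G (a, s) = some c) (hc : M c = some tv') :
    WFState typeOf ResTy
      (MState.mk (upd M c none) (upd G (a, s) none) L (SV.tv tv' :: S)) := by
  obtain ⟨⟨wf_mem, wf_stack, dom_eq, glob_ty⟩, ⟨mm, ss, ms⟩, ⟨nl, ng, ngl⟩⟩ := hwf
  -- basic facts
  have hMne : ∀ c'' tv'', upd M c none c'' = some tv'' → c'' ≠ c ∧ M c'' = some tv'' := by
    intro c'' tv'' h
    simp only [upd] at h
    split_ifs at h with hcc
    exact ⟨hcc, h⟩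
  have hGne : ∀ g c'', upd G (a, s) none g = some c'' → g ≠ (a, s) ∧ G g = some c'' := by
    intro g c'' h
    simp only [upd] at h
    split_ifs at h with hgg
    exact ⟨hgg, h⟩
  have hprim : ∀ p (v : Val Prim Fld RTag) (t : RTag),
      subTV ((Val.prim a : Val Prim Fld RTag), MTag.U) p ≠ some (v, MTag.res t) := by
    intro p v t h
    cases p <;> simp [subTV] at h
  refine ⟨⟨?_, ?_, ?_, ?_⟩, ⟨?_, ?_, ?_⟩, ⟨?_, ?_, ?_⟩⟩
  · intro c'' tv'' h
    exact wf_mem _ _ (hMne _ _ h).2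
  · intro tv h
    rcases List.mem_cons.mp h with h | h
    · have : tv = tv' := by
        simpa [SV.tv] using h
      subst this
      exact wf_mem _ _ hc
    · exact wf_stack tv (List.mem_cons_of_mem _ h)
  · intro c''
    by_cases hcc : c'' = c
    · subst hcc
      constructor
      · intro ⟨tv'', h⟩
        exact absurd ((hMne _ _ h).1) (by simp)
      · rintro (⟨g, hg⟩ | ⟨x, hx⟩)
        · obtain ⟨hgne, hg⟩ := hGne _ _ hg
          exact (ng g (a, s) c'' hgne hg hG).elim
        · exact (ngl (a, s) x c'' hG hx).elim
    · have hM' : upd M c none c'' = M c'' := by simp [upd, hcc]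
      show (∃ tv, upd M c none c'' = some tv) ↔ _
      rw [hM']
      constructor
      · intro h
        rcases (dom_eq c'').mp h with ⟨g, hg⟩ | h
        · left
          refine ⟨g, ?_⟩
          have hg' : G g = some c'' := hg
          have hgne : g ≠ (a, s) := by
            rintro rfl
            rw [hG] at hg'
            exact hcc (Option.some_injective _ hg').symm
          simp [upd, hgne, hg']
        · exact Or.inr h
      · rintro (⟨g, hg⟩ | h)
        · exact (dom_eq c'').mpr (Or.inl ⟨g, (hGne _ _ hg).2⟩)
        · exact (dom_eq c'').mpr (Or.inr h)
  · intro a' s' c'' h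
    obtain ⟨hgne, hg⟩ := hGne _ _ h
    obtain ⟨v, t, hM, ht⟩ := glob_ty a' s' c'' hg
    have hcc : c'' ≠ c := by
      rintro rfl
      exact hgne (ng _ _ c'' hgne hg hG).elim
    exact ⟨v, t, by simpa [upd, hcc] using hM, ht⟩
  · -- mem_mem
    intro c₁ c₂ tv₁ tv₂ p₁ p₂ v₁ v₂ t h₁ h₂ hs₁ hs₂
    exact mm c₁ c₂ tv₁ tv₂ p₁ p₂ v₁ v₂ t (hMne _ _ h₁).2 (hMne _ _ h₂).2 hs₁ hs₂
  · -- stack_stack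
    intro i₁ i₂ tv₁ tv₂ p₁ p₂ v₁ v₂ t h₁ h₂ hs₁ hs₂
    match i₁, i₂ with
    | 0, 0 =>
      simp only [List.getElem?_cons_zero, Option.some_inj] at h₁ h₂
      have e₁ : tv₁ = tv' := by simpa [SV.tv] using h₁.symm
      have e₂ : tv₂ = tv' := by simpa [SV.tv] using h₂.symm
      rw [e₁] at hs₁; rw [e₂] at hs₂
      exact ⟨rfl, (mm c c tv' tv' p₁ p₂ v₁ v₂ t hc hc hs₁ hs₂).2⟩
    | 0, j + 1 =>
      simp only [List.getElem?_cons_zero, Option.some_inj] at h₁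
      have e₁ : tv₁ = tv' := by simpa [SV.tv] using h₁.symm
      rw [e₁] at hs₁
      simp only [List.getElem?_cons_succ] at h₂
      exact (ms c tv' (j + 1) tv₂ p₁ p₂ v₁ v₂ t hc (by simpa using h₂) hs₁ hs₂).elim
    | j + 1, 0 =>
      simp only [List.getElem?_cons_zero, Option.some_inj] at h₂
      have e₂ : tv₂ = tv' := by simpa [SV.tv] using h₂.symm
      rw [e₂] at hs₂
      simp only [List.getElem?_cons_succ] at h₁
      exact (ms c tv' (j + 1) tv₁ p₂ p₁ v₂ v₁ t hc (by simpa using h₁) hs₂ hs₁).elim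
    | j₁ + 1, j₂ + 1 =>
      simp only [List.getElem?_cons_succ] at h₁ h₂
      exact ss (j₁ + 1) (j₂ + 1) tv₁ tv₂ p₁ p₂ v₁ v₂ t
        (by simpa using h₁) (by simpa using h₂) hs₁ hs₂
  · -- mem_stack
    intro c'' tv₁ i tv₂ p₁ p₂ v₁ v₂ t h₁ h₂ hs₁ hs₂
    obtain ⟨hcc, h₁⟩ := hMne _ _ h₁
    match i with
    | 0 =>
      simp only [List.getElem?_cons_zero, Option.some_inj] at h₂
      have e₂ : tv₂ = tv' := by simpa [SV.tv] using h₂.symm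
      rw [e₂] at hs₂
      exact hcc (mm c'' c tv₁ tv' p₁ p₂ v₁ v₂ t h₁ hc hs₁ hs₂).1
    | j + 1 =>
      simp only [List.getElem?_cons_succ] at h₂
      exact ms c'' tv₁ (j + 1) tv₂ p₁ p₂ v₁ v₂ t h₁ (by simpa using h₂) hs₁ hs₂
  · exact nl
  · intro g₁ g₂ c'' hne h₁ h₂
    exact ng g₁ g₂ c'' hne (hGne _ _ h₁).2 (hGne _ _ h₂).2
  · intro g x c'' h₁ h₂
    exact ngl g x c'' (hGne _ _ h₁).2 h₂

end MoveSem
end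

section
/- The BorrowGlobal and Exists rules preserve well-formedness: let σ = ⟨M,G,L, ⟨a,U⟩::S⟩ be a well-formed state with a ∈ 𝓐 an address and s ∈ 𝓣 a resource type. (i) If G(⟨a,s⟩) = c, then ⟨M, G, L, ⟨c,[],mut⟩::S⟩ is well-formed. (ii) For the Boolean b with b ⇔ ⟨a,s⟩ ∈ dom(G), the state ⟨M, G, L, ⟨b,U⟩::S⟩ is well-formed. -/
namespace MoveSem

variable {Loc Prim Var Fld RTag Ty : Type}

lemma subTV_prim_U_not_res [DecidableEq Fld] (p : Prim) (q : List Fld)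
    (v : Val Prim Fld RTag) (t : RTag) :
    subTV (Val.prim p, MTag.U) q ≠ some (v, MTag.res t) := by
  cases q <;> simp [subTV]

/-- The `BorrowGlobal` and `Exists` rules preserve well-formedness. -/
theorem borrowglobal_exists_preserve_wf {Loc Prim Var Fld RTag Ty : Type}
    [DecidableEq Loc] [DecidableEq Prim] [DecidableEq Var] [DecidableEq Fld] [DecidableEq Ty]
    [Countable Loc] [Countable Prim] [Countable Var] [Countable RTag] [Finite Fld]
    (typeOf : Val Prim Fld RTag → Ty) (ResTy : Set Ty) (Addr : Set Prim)
    (boolP : Bool → Prim)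
    (M : Loc → Option (TVal Prim Fld RTag)) (G : Prim × Ty → Option Loc)
    (L : Var → Option (Loc ⊕ MRef Loc Fld)) (S : List (SVal Loc Prim Fld RTag))
    (a : Prim) (s : Ty)
    (hwf : WFState typeOf ResTy (MState.mk M G L (SV.tv (Val.prim a, MTag.U) :: S)))
    (ha : a ∈ Addr) (hs : s ∈ ResTy)
    -- primitive values (in particular the Booleans) have non-resource types:
    (hprim : ∀ p : Prim, typeOf (Val.prim p) ∉ ResTy) :
    -- (i) BorrowGlobal
    (∀ c : Loc, G (a, s) = some c →
      WFState typeOf ResTy (MState.mk M G L (SV.ref ⟨c, [], true⟩ :: S))) ∧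
    -- (ii) Exists
    (∀ b : Bool, (b = true ↔ ∃ c, G (a, s) = some c) →
      WFState typeOf ResTy
        (MState.mk M G L (SV.tv (Val.prim (boolP b), MTag.U) :: S))) := by
  obtain ⟨gc, tc, na⟩ := hwf
  constructor
  · -- BorrowGlobal
    intro c hc
    refine ⟨⟨?_, ?_, ?_, ?_⟩, ⟨?_, ?_, ?_⟩, ⟨?_, ?_, ?_⟩⟩
    · exact gc.wf_mem
    · intro tv htv
      simp only [List.mem_cons] at htv
      rcases htv with h | h
      · exact absurd h (by simp [SV.tv, SV.ref])
      · exact gc.wf_stack tv (List.mem_cons_of_mem _ h)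
    · exact gc.dom_eq
    · exact gc.glob_ty
    · exact tc.mem_mem
    · intro i₁ i₂ tv₁ tv₂ p₁ p₂ v₁ v₂ t h1 h2 hs1 hs2
      match i₁, i₂, h1, h2 with
      | 0, _, h1, _ => exact absurd h1 (by simp [SV.tv, SV.ref])
      | _+1, 0, _, h2 => exact absurd h2 (by simp [SV.tv, SV.ref])
      | n₁+1, n₂+1, h1, h2 =>
        simp only [List.getElem?_cons_succ] at h1 h2
        have := tc.stack_stack (n₁+1) (n₂+1) tv₁ tv₂ p₁ p₂ v₁ v₂ t
          (by simpa using h1) (by simpa using h2) hs1 hs2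
        exact ⟨by omega, this.2⟩
    · intro c' tv i tv' p₁ p₂ v₁ v₂ t hm hst hs1 hs2
      match i, hst with
      | 0, hst => exact absurd hst (by simp [SV.tv, SV.ref])
      | n+1, hst =>
        simp only [List.getElem?_cons_succ] at hst
        exact tc.mem_stack c' tv (n+1) tv' p₁ p₂ v₁ v₂ t hm (by simpa using hst) hs1 hs2
    · exact na.locals
    · exact na.globals
    · exact na.glob_loc
  · -- Exists
    intro b _
    refine ⟨⟨?_, ?_, ?_, ?_⟩, ⟨?_, ?_, ?_⟩, ⟨?_, ?_, ?_⟩⟩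
    · exact gc.wf_mem
    · intro tv htv
      simp only [List.mem_cons] at htv
      rcases htv with h | h
      · have : tv = (Val.prim (boolP b), MTag.U) := by
          simpa [SV.tv] using h
        subst this
        exact WFTV.prim _ _ (by simp [hprim (boolP b)])
      · exact gc.wf_stack tv (List.mem_cons_of_mem _ h)
    · exact gc.dom_eq
    · exact gc.glob_ty
    · exact tc.mem_mem
    · intro i₁ i₂ tv₁ tv₂ p₁ p₂ v₁ v₂ t h1 h2 hs1 hs2
      match i₁, i₂, h1, h2 with
      | 0, _, h1, _ =>
        have : tv₁ = (Val.prim (boolP b), MTag.U) := by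
          have := h1; simp [SV.tv] at this; exact this.symm
        subst this
        exact absurd hs1 (subTV_prim_U_not_res _ _ _ _)
      | _+1, 0, _, h2 =>
        have : tv₂ = (Val.prim (boolP b), MTag.U) := by
          have := h2; simp [SV.tv] at this; exact this.symm
        subst this
        exact absurd hs2 (subTV_prim_U_not_res _ _ _ _)
      | n₁+1, n₂+1, h1, h2 =>
        simp only [List.getElem?_cons_succ] at h1 h2
        have := tc.stack_stack (n₁+1) (n₂+1) tv₁ tv₂ p₁ p₂ v₁ v₂ t
          (by simpa using h1) (by simpa using h2) hs1 hs2
        exact ⟨by omega, this.2⟩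
    · intro c' tv i tv' p₁ p₂ v₁ v₂ t hm hst hs1 hs2
      match i, hst with
      | 0, hst =>
        have : tv' = (Val.prim (boolP b), MTag.U) := by
          have := hst; simp [SV.tv] at this; exact this.symm
        subst this
        exact absurd hs2 (subTV_prim_U_not_res _ _ _ _)
      | n+1, hst =>
        simp only [List.getElem?_cons_succ] at hst
        exact tc.mem_stack c' tv (n+1) tv' p₁ p₂ v₁ v₂ t hm (by simpa using hst) hs1 hs2
    · exact na.locals
    · exact na.globals
    · exact na.glob_loc

end MoveSem
end

section
/- The LoadConst and StackOp rules preserve well-formedness: let σ = ⟨M,G,L,S⟩ be a well-formed state. (i) LoadConst: for any primitive constant a, the state ⟨M, G, L, ⟨a,U⟩::S⟩ is well-formed. (ii) StackOp: if S = ⟨v₁,U⟩::⋯::⟨vₙ,U⟩::S' where each vᵢ is a primitive value, Op is an n-ary operation on primitive values, and legal(Op, v₁,…,vₙ) holds, then the state ⟨M, G, L, ⟨Op(v₁,…,vₙ),U⟩::S'⟩ is well-formed. -/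
namespace MoveSem

variable {Loc Prim Var Fld RTag Ty : Type}

/-- A primitive tagged value has no resource subterm. -/
lemma sub_prim_no_res [DecidableEq Fld] (a : Prim) (p : List Fld)
    (v : Val Prim Fld RTag) (t : RTag) :
    subTV (Val.prim a, MTag.U) p = some (v, MTag.res t) → False := by
  cases p with
  | nil => intro h; simp [subTV] at h
  | cons f p' => intro h; simp [subTV] at h

/-- Pushing a primitive `U`-tagged value onto a shifted suffix of the stack
preserves well-formedness. -/
lemma push_prim_wf [DecidableEq Fld]
    (typeOf : Val Prim Fld RTag → Ty) (ResTy : Set Ty)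
    (M : Loc → Option (TVal Prim Fld RTag)) (G : Prim × Ty → Option Loc)
    (L : Var → Option (Loc ⊕ MRef Loc Fld)) (S S' : List (SVal Loc Prim Fld RTag))
    (hwf : WFState typeOf ResTy (MState.mk M G L S))
    (hprim : ∀ p : Prim, typeOf (Val.prim p) ∉ ResTy)
    (a : Prim) (k : ℕ) (hidx : ∀ j : ℕ, S'[j]? = S[k + j]?) :
    WFState typeOf ResTy (MState.mk M G L (SV.tv (Val.prim a, MTag.U) :: S')) := by
  have hmem : ∀ sv, sv ∈ S' → sv ∈ S := by
    intro sv hsv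
    obtain ⟨j, hj⟩ := List.mem_iff_getElem?.mp hsv
    exact List.mem_of_getElem? ((hidx j) ▸ hj)
  constructor
  · constructor
    · exact hwf.gc.wf_mem
    · intro tv htv
      rcases List.mem_cons.mp htv with h | h
      · have : tv = (Val.prim a, MTag.U) := by
          simpa [SV.tv] using h
        subst this
        exact WFTV.prim a MTag.U (by simp [hprim a])
      · exact hwf.gc.wf_stack tv (hmem _ h)
    · exact hwf.gc.dom_eq
    · exact hwf.gc.glob_ty
  · constructor
    · exact hwf.tc.mem_mem
    · intro i₁ i₂ tv₁ tv₂ p₁ p₂ v₁ v₂ t h₁ h₂ hs₁ hs₂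
      match i₁, h₁ with
      | 0, h₁ =>
        have : tv₁ = (Val.prim a, MTag.U) := by
          simp [SV.tv] at h₁; exact h₁.symm
        exact absurd hs₁ (by subst this; exact sub_prim_no_res a p₁ v₁ t)
      | j₁ + 1, h₁ =>
      match i₂, h₂ with
      | 0, h₂ =>
        have : tv₂ = (Val.prim a, MTag.U) := by
          simp [SV.tv] at h₂; exact h₂.symm
        exact absurd hs₂ (by subst this; exact sub_prim_no_res a p₂ v₂ t)
      | j₂ + 1, h₂ =>
        simp only [List.getElem?_cons_succ] at h₁ h₂
        have h₁' : S[k + j₁]? = some (SV.tv tv₁) := (hidx j₁) ▸ h₁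
        have h₂' : S[k + j₂]? = some (SV.tv tv₂) := (hidx j₂) ▸ h₂
        obtain ⟨hij, hp⟩ := hwf.tc.stack_stack _ _ tv₁ tv₂ p₁ p₂ v₁ v₂ t h₁' h₂' hs₁ hs₂
        exact ⟨by omega, hp⟩
    · intro c tv i tv' p₁ p₂ v₁ v₂ t hM hS hs₁ hs₂
      match i, hS with
      | 0, hS =>
        have : tv' = (Val.prim a, MTag.U) := by
          simp [SV.tv] at hS; exact hS.symm
        exact absurd hs₂ (by subst this; exact sub_prim_no_res a p₂ v₂ t)
      | j + 1, hS =>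
        simp only [List.getElem?_cons_succ] at hS
        have hS' : S[k + j]? = some (SV.tv tv') := (hidx j) ▸ hS
        exact hwf.tc.mem_stack c tv _ tv' p₁ p₂ v₁ v₂ t hM hS' hs₁ hs₂
  · exact ⟨hwf.na.locals, hwf.na.globals, hwf.na.glob_loc⟩

/-- The `LoadConst` and `StackOp` rules preserve well-formedness. -/
theorem loadconst_stackop_preserve_wf {Loc Prim Var Fld RTag Ty : Type}
    [DecidableEq Loc] [DecidableEq Prim] [DecidableEq Var] [DecidableEq Fld] [DecidableEq Ty]
    [Countable Loc] [Countable Prim] [Countable Var] [Countable RTag] [Finite Fld]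
    (typeOf : Val Prim Fld RTag → Ty) (ResTy : Set Ty)
    (M : Loc → Option (TVal Prim Fld RTag)) (G : Prim × Ty → Option Loc)
    (L : Var → Option (Loc ⊕ MRef Loc Fld)) (S : List (SVal Loc Prim Fld RTag))
    (hwf : WFState typeOf ResTy (MState.mk M G L S))
    -- primitive values have non-resource types:
    (hprim : ∀ p : Prim, typeOf (Val.prim p) ∉ ResTy) :
    -- (i) LoadConst
    (∀ a : Prim,
      WFState typeOf ResTy (MState.mk M G L (SV.tv (Val.prim a, MTag.U) :: S))) ∧
    -- (ii) StackOp
    (∀ (n : ℕ) (op : List Prim → Prim) (legal : List Prim → Prop)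
      (vs : List Prim) (S' : List (SVal Loc Prim Fld RTag)),
      S = (vs.map fun v => SV.tv (Val.prim v, MTag.U)) ++ S' →
      vs.length = n → legal vs →
      WFState typeOf ResTy
        (MState.mk M G L (SV.tv (Val.prim (op vs), MTag.U) :: S'))) := by
  constructor
  · intro a
    exact push_prim_wf typeOf ResTy M G L S S hwf hprim a 0 (by simp)
  · intro n op legal vs S' hS hlen hlegal
    refine push_prim_wf typeOf ResTy M G L S S' hwf hprim (op vs) vs.length ?_
    intro j
    subst hS
    rw [List.getElem?_append_right (by simp)]
    simp

end MoveSem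
end

section
/- Resource invariance of non-Pack/Unpack steps: let σ be a well-formed state and let σ →op σ' be a single step of the Move bytecode operational semantics where op is any operation other than Pack(s) and Unpack(s) (i.e., op is one of MvLoc, CpLoc, StLoc, BorrowLoc, BorrowField, FreezeRef, ReadRef, WriteRef, Pop, LoadConst, Op, MoveTo, MoveFrom, BorrowGlobal, Exists, or a Branch step). Then resources(σ') = resources(σ). -/
namespace MoveSem

variable {Loc Prim Var Fld RTag Ty : Type}

/-- Bytecode operations of the (call-free) Move bytecode language. -/
inductive Op (Prim Var Fld Ty : Type) : Type where
  | MvLoc (x : Var)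
  | CpLoc (x : Var)
  | StLoc (x : Var)
  | BorrowLoc (x : Var)
  | BorrowField (f : Fld)
  | FreezeRef
  | ReadRef
  | WriteRef
  | Pop
  | Pack (s : Ty)
  | Unpack (s : Ty)
  | LoadConst (a : Prim)
  | StackOp (n : ℕ) (op : List Prim → Prim) (legal : List Prim → Prop)
  | MoveTo (s : Ty)
  | MoveFrom (s : Ty)
  | BorrowGlobal (s : Ty)
  | ExistsG (s : Ty)
  | Branch (l : ℕ)

/-- The side condition of `StLoc x`: the local `x` is unset, holds a reference,
or holds a location storing a non-resource (`U`-tagged) value. -/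
def stlocOK (M : Loc → Option (TVal Prim Fld RTag))
    (L : Var → Option (Loc ⊕ MRef Loc Fld)) (x : Var) : Prop :=
  L x = none ∨ (∃ r, L x = some (Sum.inr r)) ∨
    (∃ c v, L x = some (Sum.inl c) ∧ M c = some (v, MTag.U))

/-- The small-step operational semantics of the Move bytecode interpreter. -/
inductive Step [DecidableEq Loc] [DecidableEq Prim] [DecidableEq Var] [DecidableEq Fld]
    [DecidableEq Ty] (typeOf : Val Prim Fld RTag → Ty) (ResTy : Set Ty)
    (Addr : Set Prim) (boolP : Bool → Prim) :
    Op Prim Var Fld Ty → MState Loc Prim Var Fld RTag Ty →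
      MState Loc Prim Var Fld RTag Ty → Prop where
  | mvloc_loc {M G L S x c tv} (h1 : L x = some (Sum.inl c)) (h2 : M c = some tv) :
      Step typeOf ResTy Addr boolP (Op.MvLoc x) ⟨M, G, L, S⟩
        ⟨upd M c none, G, upd L x none, SV.tv tv :: S⟩
  | mvloc_ref {M G L S x r} (h1 : L x = some (Sum.inr r)) :
      Step typeOf ResTy Addr boolP (Op.MvLoc x) ⟨M, G, L, S⟩
        ⟨M, G, upd L x none, SV.ref r :: S⟩
  | cploc_loc {M G L S x c v} (h1 : L x = some (Sum.inl c))
      (h2 : M c = some (v, MTag.U)) :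
      Step typeOf ResTy Addr boolP (Op.CpLoc x) ⟨M, G, L, S⟩
        ⟨M, G, L, SV.tv (v, MTag.U) :: S⟩
  | cploc_ref {M G L S x r} (h1 : L x = some (Sum.inr r)) :
      Step typeOf ResTy Addr boolP (Op.CpLoc x) ⟨M, G, L, S⟩
        ⟨M, G, L, SV.ref r :: S⟩
  | stloc_tv {M G L S x tv c'} (h1 : stlocOK M L x) (h2 : M c' = none) :
      Step typeOf ResTy Addr boolP (Op.StLoc x) ⟨M, G, L, SV.tv tv :: S⟩
        ⟨upd M c' (some tv), G, upd L x (some (Sum.inl c')), S⟩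
  | stloc_ref {M G L S x r} (h1 : stlocOK M L x) :
      Step typeOf ResTy Addr boolP (Op.StLoc x) ⟨M, G, L, SV.ref r :: S⟩
        ⟨M, G, upd L x (some (Sum.inr r)), S⟩
  | borrowloc {M G L S x c} (h1 : L x = some (Sum.inl c)) :
      Step typeOf ResTy Addr boolP (Op.BorrowLoc x) ⟨M, G, L, S⟩
        ⟨M, G, L, SV.ref ⟨c, [], true⟩ :: S⟩
  | borrowfield {M G L S c p q f tv flds t tvf} (h1 : M c = some tv)
      (h2 : subTV tv p = some (Val.record flds, t)) (h3 : lookupF flds f = some tvf) :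
      Step typeOf ResTy Addr boolP (Op.BorrowField f) ⟨M, G, L, SV.ref ⟨c, p, q⟩ :: S⟩
        ⟨M, G, L, SV.ref ⟨c, p ++ [f], q⟩ :: S⟩
  | freezeref {M G L S c p q} :
      Step typeOf ResTy Addr boolP Op.FreezeRef ⟨M, G, L, SV.ref ⟨c, p, q⟩ :: S⟩
        ⟨M, G, L, SV.ref ⟨c, p, false⟩ :: S⟩
  | readref {M G L S c p q tv v} (h1 : M c = some tv)
      (h2 : subTV tv p = some (v, MTag.U)) :
      Step typeOf ResTy Addr boolP Op.ReadRef ⟨M, G, L, SV.ref ⟨c, p, q⟩ :: S⟩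
        ⟨M, G, L, SV.tv (v, MTag.U) :: S⟩
  | writeref {M G L S c p tv v v' tv2} (h1 : M c = some tv)
      (h2 : subTV tv p = some (v, MTag.U))
      (h3 : setSubTV tv p (v', MTag.U) = some tv2) :
      Step typeOf ResTy Addr boolP Op.WriteRef
        ⟨M, G, L, SV.tv (v', MTag.U) :: SV.ref ⟨c, p, true⟩ :: S⟩
        ⟨upd M c (some tv2), G, L, S⟩
  | pop_tv {M G L S v} :
      Step typeOf ResTy Addr boolP Op.Pop ⟨M, G, L, SV.tv (v, MTag.U) :: S⟩ ⟨M, G, L, S⟩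
  | pop_ref {M G L S r} :
      Step typeOf ResTy Addr boolP Op.Pop ⟨M, G, L, SV.ref r :: S⟩ ⟨M, G, L, S⟩
  | pack_r {M G L S s flds t} (h1 : s ∈ ResTy) (h2 : typeOf (Val.record flds) = s)
      (h3 : flds ≠ []) (h4 : (flds.map Prod.fst).Nodup)
      (h5 : t ∉ resources (MState.mk M G L ((flds.map fun ft => SV.tv ft.2) ++ S))) :
      Step typeOf ResTy Addr boolP (Op.Pack s)
        ⟨M, G, L, (flds.map fun ft => SV.tv ft.2) ++ S⟩
        ⟨M, G, L, SV.tv (Val.record flds, MTag.res t) :: S⟩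
  | pack_u {M G L S s flds} (h1 : s ∉ ResTy) (h2 : typeOf (Val.record flds) = s)
      (h3 : flds ≠ []) (h4 : (flds.map Prod.fst).Nodup)
      (h5 : ∀ f v tg, (f, (v, tg)) ∈ flds → tg = MTag.U) :
      Step typeOf ResTy Addr boolP (Op.Pack s)
        ⟨M, G, L, (flds.map fun ft => SV.tv ft.2) ++ S⟩
        ⟨M, G, L, SV.tv (Val.record flds, MTag.U) :: S⟩
  | unpack {M G L S s flds t} :
      Step typeOf ResTy Addr boolP (Op.Unpack s)
        ⟨M, G, L, SV.tv (Val.record flds, t) :: S⟩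
        ⟨M, G, L, (flds.map fun ft => SV.tv ft.2) ++ S⟩
  | loadconst {M G L S a} :
      Step typeOf ResTy Addr boolP (Op.LoadConst a) ⟨M, G, L, S⟩
        ⟨M, G, L, SV.tv (Val.prim a, MTag.U) :: S⟩
  | stackop {M G L S n op legal vs} (h1 : vs.length = n) (h2 : legal vs) :
      Step typeOf ResTy Addr boolP (Op.StackOp n op legal)
        ⟨M, G, L, (vs.map fun v => SV.tv (Val.prim v, MTag.U)) ++ S⟩
        ⟨M, G, L, SV.tv (Val.prim (op vs), MTag.U) :: S⟩
  | moveto {M G L S a v t s c} (h1 : a ∈ Addr) (h2 : typeOf v = s) (h3 : s ∈ ResTy)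
      (h4 : G (a, s) = none) (h5 : M c = none) :
      Step typeOf ResTy Addr boolP (Op.MoveTo s)
        ⟨M, G, L, SV.tv (Val.prim a, MTag.U) :: SV.tv (v, t) :: S⟩
        ⟨upd M c (some (v, t)), upd G (a, s) (some c), L, S⟩
  | movefrom {M G L S a s c tv'} (h1 : s ∈ ResTy) (h2 : a ∈ Addr)
      (h3 : G (a, s) = some c) (h4 : M c = some tv') :
      Step typeOf ResTy Addr boolP (Op.MoveFrom s)
        ⟨M, G, L, SV.tv (Val.prim a, MTag.U) :: S⟩
        ⟨upd M c none, upd G (a, s) none, L, SV.tv tv' :: S⟩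
  | borrowglobal {M G L S a s c} (h1 : s ∈ ResTy) (h2 : a ∈ Addr)
      (h3 : G (a, s) = some c) :
      Step typeOf ResTy Addr boolP (Op.BorrowGlobal s)
        ⟨M, G, L, SV.tv (Val.prim a, MTag.U) :: S⟩
        ⟨M, G, L, SV.ref ⟨c, [], true⟩ :: S⟩
  | existsg {M G L S a s b} (h1 : a ∈ Addr) (h2 : b = true ↔ ∃ c, G (a, s) = some c) :
      Step typeOf ResTy Addr boolP (Op.ExistsG s)
        ⟨M, G, L, SV.tv (Val.prim a, MTag.U) :: S⟩
        ⟨M, G, L, SV.tv (Val.prim (boolP b), MTag.U) :: S⟩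

/-- Program steps: execute the current instruction and increment the program counter,
or take a `Branch` step, which pops a location holding a tagged Boolean. -/
inductive PStep [DecidableEq Loc] [DecidableEq Prim] [DecidableEq Var] [DecidableEq Fld]
    [DecidableEq Ty] (typeOf : Val Prim Fld RTag → Ty) (ResTy : Set Ty)
    (Addr : Set Prim) (boolP : Bool → Prim) (P : ℕ → Op Prim Var Fld Ty) :
    ℕ × MState Loc Prim Var Fld RTag Ty → ℕ × MState Loc Prim Var Fld RTag Ty → Prop where
  | exec {pc op σ σ'} (h : P pc = op) (hs : Step typeOf ResTy Addr boolP op σ σ') :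
      PStep typeOf ResTy Addr boolP P (pc, σ) (pc + 1, σ')
  | branch_t {pc l M G L c S} (h : P pc = Op.Branch l)
      (hb : M c = some (Val.prim (boolP true), MTag.U)) :
      PStep typeOf ResTy Addr boolP P (pc, ⟨M, G, L, SV.loc c :: S⟩) (l, ⟨M, G, L, S⟩)
  | branch_f {pc l M G L c S} (h : P pc = Op.Branch l)
      (hb : M c = some (Val.prim (boolP false), MTag.U)) :
      PStep typeOf ResTy Addr boolP P (pc, ⟨M, G, L, SV.loc c :: S⟩) (pc + 1, ⟨M, G, L, S⟩)

/-! ### Auxiliary lemmas -/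

section Aux

variable [DecidableEq Fld]

lemma subTV_nil (tv : TVal Prim Fld RTag) : subTV tv [] = some tv := by
  cases tv with
  | mk v t => cases v <;> rfl

lemma subTV_cons_prim (a : Prim) (t : MTag RTag) (f : Fld) (p : List Fld) :
    subTV ((Val.prim a : Val Prim Fld RTag), t) (f :: p) = none := rfl

lemma subTV_cons_record (flds : List (Fld × TVal Prim Fld RTag)) (t : MTag RTag)
    (f : Fld) (p : List Fld) :
    subTV (Val.record flds, t) (f :: p) =
      match lookupF flds f with
      | some tv' => subTV tv' p
      | none => none := rfl

lemma lookupF_mem {α : Type} {l : List (Fld × α)} {f : Fld} {a : α}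
    (h : lookupF l f = some a) : (f, a) ∈ l := by
  induction l with
  | nil => simp [lookupF] at h
  | cons hd tl ih =>
    obtain ⟨g, b⟩ := hd
    simp only [lookupF] at h
    split at h
    · next hgf => cases h; exact hgf ▸ List.mem_cons_self
    · exact List.mem_cons_of_mem _ (ih h)

lemma updRec_head_eq {f g : Fld} (hg : g = f) (b tv' : TVal Prim Fld RTag) :
    (if ((g, b) : Fld × TVal Prim Fld RTag).1 = f then ((g, b).1, tv') else (g, b))
      = (g, tv') := by simp [hg]

lemma updRec_head_ne {f g : Fld} (hg : ¬ g = f) (b tv' : TVal Prim Fld RTag) :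
    (if ((g, b) : Fld × TVal Prim Fld RTag).1 = f then ((g, b).1, tv') else (g, b))
      = (g, b) := by simp [hg]

lemma lookupF_map_eq {l : List (Fld × TVal Prim Fld RTag)} {f : Fld} {a : TVal Prim Fld RTag}
    (h : lookupF l f = some a) (tv' : TVal Prim Fld RTag) :
    lookupF (l.map fun ft => if ft.1 = f then (ft.1, tv') else ft) f = some tv' := by
  induction l with
  | nil => simp [lookupF] at h
  | cons hd tl ih =>
    obtain ⟨g, b⟩ := hd
    rw [List.map_cons]
    by_cases hg : g = f
    · rw [updRec_head_eq hg]
      simp only [lookupF, if_pos hg]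
    · rw [updRec_head_ne hg]
      simp only [lookupF, if_neg hg] at h ⊢
      exact ih h

lemma lookupF_map_ne (l : List (Fld × TVal Prim Fld RTag)) {f g : Fld}
    (hg : g ≠ f) (tv' : TVal Prim Fld RTag) :
    lookupF (l.map fun ft => if ft.1 = f then (ft.1, tv') else ft) g = lookupF l g := by
  induction l with
  | nil => rfl
  | cons hd tl ih =>
    obtain ⟨g', b⟩ := hd
    rw [List.map_cons]
    by_cases hg' : g' = f
    · rw [updRec_head_eq hg']
      have h2 : ¬ g' = g := fun h => hg (h ▸ hg')
      simp only [lookupF, if_neg h2]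
      exact ih
    · rw [updRec_head_ne hg']
      by_cases h2 : g' = g
      · simp only [lookupF, if_pos h2]
      · simp only [lookupF, if_neg h2]
        exact ih

end Aux
section Aux2

variable [DecidableEq Fld] {typeOf : Val Prim Fld RTag → Ty} {ResTy : Set Ty}

/-- A tagged value with no resource-tagged subterm. -/
def NoRes (tv : TVal Prim Fld RTag) : Prop :=
  ∀ p v t, subTV tv p ≠ some (v, MTag.res t)

lemma WFTV_tag {tv : TVal Prim Fld RTag} (h : WFTV typeOf ResTy tv) :
    typeOf tv.1 ∈ ResTy ↔ tv.2 ≠ MTag.U := by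
  cases h with
  | prim p t hiff => exact hiff
  | record flds t _ _ _ hiff _ => exact hiff

/-- A well-formed `U`-tagged value has no resource-tagged subterm. -/
lemma wf_U_noRes : ∀ (p : List Fld) (tv : TVal Prim Fld RTag),
    WFTV typeOf ResTy tv → tv.2 = MTag.U → ∀ v t, subTV tv p ≠ some (v, MTag.res t) := by
  intro p
  induction p with
  | nil =>
    intro tv hwf hU v t h
    rw [subTV_nil] at h
    cases h
    simp at hU
  | cons f p' ih =>
    rintro ⟨vv, tg⟩ hwf hU v t h
    cases vv with
    | prim a => rw [subTV_cons_prim] at h; cases h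
    | record flds =>
      rw [subTV_cons_record] at h
      cases hl : lookupF flds f with
      | none => rw [hl] at h; cases h
      | some tvf =>
        rw [hl] at h
        cases hwf with
        | record _ _ hne hnodup hwfF hiff hnores =>
          simp only at hU
          subst hU
          have hnr : typeOf (Val.record flds) ∉ ResTy := by
            intro hin
            exact (hiff.mp hin) rfl
          have hmem := lookupF_mem hl
          have hwf' := hwfF _ _ hmem
          have hnotres := hnores hnr _ _ hmem
          have htag : tvf.2 = MTag.U := by
            by_contra hne'
            exact hnotres ((WFTV_tag hwf').mpr hne')
          exact ih tvf hwf' htag v t h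

lemma wf_U_noRes' {v : Val Prim Fld RTag} (h : WFTV typeOf ResTy (v, MTag.U)) :
    NoRes ((v, MTag.U) : TVal Prim Fld RTag) :=
  fun p v' t => wf_U_noRes p (v, MTag.U) h rfl v' t

/-- Subterms of well-formed values are well-formed. -/
lemma wf_sub : ∀ (p : List Fld) (tv tv' : TVal Prim Fld RTag),
    WFTV typeOf ResTy tv → subTV tv p = some tv' → WFTV typeOf ResTy tv' := by
  intro p
  induction p with
  | nil =>
    intro tv tv' hwf h
    rw [subTV_nil] at h
    cases h
    exact hwf
  | cons f p' ih =>
    rintro ⟨vv, tg⟩ tv' hwf h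
    cases vv with
    | prim a => rw [subTV_cons_prim] at h; cases h
    | record flds =>
      rw [subTV_cons_record] at h
      cases hl : lookupF flds f with
      | none => rw [hl] at h; cases h
      | some tvf =>
        rw [hl] at h
        cases hwf with
        | record _ _ hne hnodup hwfF hiff hnores =>
          exact ih tvf tv' (hwfF _ _ (lookupF_mem hl)) h

end Aux2
section Aux3

variable [DecidableEq Fld]

lemma setSubTV_nil (tv tv' : TVal Prim Fld RTag) : setSubTV tv [] tv' = some tv' := by
  rcases tv with ⟨v, t⟩; cases v <;> rfl

lemma setSubTV_cons_prim (a : Prim) (t : MTag RTag) (f : Fld) (p : List Fld)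
    (tv' : TVal Prim Fld RTag) :
    setSubTV ((Val.prim a : Val Prim Fld RTag), t) (f :: p) tv' = none := rfl

lemma setSubTV_cons_record (flds : List (Fld × TVal Prim Fld RTag)) (t : MTag RTag)
    (f : Fld) (p : List Fld) (tv' : TVal Prim Fld RTag) :
    setSubTV (Val.record flds, t) (f :: p) tv' =
      match lookupF flds f with
      | some tvf =>
        match setSubTV tvf p tv' with
        | some tvf' =>
          some (Val.record (flds.map fun ft => if ft.1 = f then (ft.1, tvf') else ft), t)
        | none => none
      | none => none := rfl

lemma setSub_res_forward : ∀ (p : List Fld) (tv tvnew tv2 : TVal Prim Fld RTag),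
    setSubTV tv p tvnew = some tv2 →
    ∀ q v t, subTV tv2 q = some (v, MTag.res t) →
      (∃ q' v', q = p ++ q' ∧ subTV tvnew q' = some (v', MTag.res t)) ∨
      (∃ v', subTV tv q = some (v', MTag.res t)) := by
  intro p
  induction p with
  | nil =>
    intro tv tvnew tv2 hset q v t hq
    rw [setSubTV_nil] at hset
    cases hset
    exact Or.inl ⟨q, v, rfl, hq⟩
  | cons f p' ih =>
    rintro ⟨vv, tg⟩ tvnew tv2 hset q v t hq
    cases vv with
    | prim a => rw [setSubTV_cons_prim] at hset; cases hset
    | record flds =>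
      rw [setSubTV_cons_record] at hset
      cases hl : lookupF flds f with
      | none => rw [hl] at hset; cases hset
      | some tvf =>
        rw [hl] at hset
        dsimp only at hset
        cases hs' : setSubTV tvf p' tvnew with
        | none => rw [hs'] at hset; cases hset
        | some tvf' =>
          rw [hs'] at hset
          simp only [Option.some.injEq] at hset
          subst hset
          cases q with
          | nil =>
            rw [subTV_nil] at hq
            cases hq
            exact Or.inr ⟨Val.record flds, by rw [subTV_nil]⟩
          | cons g q' =>
            rw [subTV_cons_record] at hq
            by_cases hg : g = f
            · subst hg
              rw [lookupF_map_eq hl] at hq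
              rcases ih tvf tvnew tvf' hs' q' v t hq with ⟨q'', v', hq'', hsub⟩ | ⟨v', hsub⟩
              · exact Or.inl ⟨q'', v', by rw [hq'']; rfl, hsub⟩
              · exact Or.inr ⟨v', by rw [subTV_cons_record, hl]; exact hsub⟩
            · rw [lookupF_map_ne _ hg] at hq
              refine Or.inr ⟨v, ?_⟩
              rw [subTV_cons_record]
              exact hq

lemma setSub_res_backward : ∀ (p : List Fld) (tv tvold tvnew tv2 : TVal Prim Fld RTag),
    subTV tv p = some tvold → setSubTV tv p tvnew = some tv2 →
    ∀ q v t, subTV tv q = some (v, MTag.res t) →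
      (∃ q' v', q = p ++ q' ∧ subTV tvold q' = some (v', MTag.res t)) ∨
      (∃ v', subTV tv2 q = some (v', MTag.res t)) := by
  intro p
  induction p with
  | nil =>
    intro tv tvold tvnew tv2 hsub hset q v t hq
    rw [subTV_nil] at hsub
    cases hsub
    exact Or.inl ⟨q, v, rfl, hq⟩
  | cons f p' ih =>
    rintro ⟨vv, tg⟩ tvold tvnew tv2 hsub hset q v t hq
    cases vv with
    | prim a => rw [setSubTV_cons_prim] at hset; cases hset
    | record flds =>
      rw [setSubTV_cons_record] at hset
      rw [subTV_cons_record] at hsub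
      cases hl : lookupF flds f with
      | none => rw [hl] at hset; cases hset
      | some tvf =>
        rw [hl] at hset hsub
        dsimp only at hset hsub
        cases hs' : setSubTV tvf p' tvnew with
        | none => rw [hs'] at hset; cases hset
        | some tvf' =>
          rw [hs'] at hset
          simp only [Option.some.injEq] at hset
          subst hset
          cases q with
          | nil =>
            rw [subTV_nil] at hq
            cases hq
            exact Or.inr ⟨_, by rw [subTV_nil]⟩
          | cons g q' =>
            rw [subTV_cons_record] at hq
            by_cases hg : g = f
            · subst hg
              rw [hl] at hq
              rcases ih tvf tvold tvnew tvf' hsub hs' q' v t hq with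
                ⟨q'', v', hq'', hsub'⟩ | ⟨v', hsub'⟩
              · exact Or.inl ⟨q'', v', by rw [hq'']; rfl, hsub'⟩
              · refine Or.inr ⟨v', ?_⟩
                rw [subTV_cons_record, lookupF_map_eq hl]
                exact hsub'
            · refine Or.inr ⟨v, ?_⟩
              rw [subTV_cons_record, lookupF_map_ne _ hg]
              exact hq

end Aux3
section Aux4

variable [DecidableEq Fld]

/-- Resource tags occurring in subterms of a tagged value. -/
def tvTags (tv : TVal Prim Fld RTag) : Set RTag :=
  {t | ∃ p v, subTV tv p = some (v, MTag.res t)}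

/-- Resource tags occurring in the image of a memory. -/
def memTags (M : Loc → Option (TVal Prim Fld RTag)) : Set RTag :=
  {t | ∃ c tv p v, M c = some tv ∧ subTV tv p = some (v, MTag.res t)}

/-- Resource tags occurring in tagged values on a stack. -/
def stackTags (S : List (SVal Loc Prim Fld RTag)) : Set RTag :=
  {t | ∃ tv, SV.tv tv ∈ S ∧ ∃ p v, subTV tv p = some (v, MTag.res t)}

lemma resources_eq (M : Loc → Option (TVal Prim Fld RTag)) (G : Prim × Ty → Option Loc)
    (L : Var → Option (Loc ⊕ MRef Loc Fld)) (S : List (SVal Loc Prim Fld RTag)) :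
    resources (⟨M, G, L, S⟩ : MState Loc Prim Var Fld RTag Ty) = memTags M ∪ stackTags S := by
  ext t
  simp only [resources, memTags, stackTags, tvTags, Set.mem_setOf_eq, Set.mem_union]

lemma tvTags_empty {tv : TVal Prim Fld RTag} (h : NoRes tv) : tvTags tv = ∅ := by
  ext t
  simp only [tvTags, Set.mem_setOf_eq, Set.mem_empty_iff_false, iff_false, not_exists]
  intro p v
  exact h p v t

lemma tvTags_prim_U (a : Prim) : tvTags ((Val.prim a, MTag.U) : TVal Prim Fld RTag) = ∅ := by
  apply tvTags_empty
  rintro (_ | ⟨f, p⟩) v t h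
  · rw [subTV_nil] at h; cases h
  · rw [subTV_cons_prim] at h; cases h

lemma stackTags_cons_tv (tv : TVal Prim Fld RTag) (S : List (SVal Loc Prim Fld RTag)) :
    stackTags (SV.tv tv :: S) = tvTags tv ∪ stackTags S := by
  ext t
  simp only [stackTags, tvTags, Set.mem_setOf_eq, Set.mem_union, List.mem_cons]
  constructor
  · rintro ⟨tv', (h | h), hp⟩
    · obtain rfl : tv = tv' := Sum.inl.inj h.symm
      exact Or.inl hp
    · exact Or.inr ⟨tv', h, hp⟩
  · rintro (hp | ⟨tv', h, hp⟩)
    · exact ⟨tv, Or.inl rfl, hp⟩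
    · exact ⟨tv', Or.inr h, hp⟩

lemma stackTags_cons_ne (x : SVal Loc Prim Fld RTag) (hx : ∀ tv, x ≠ SV.tv tv)
    (S : List (SVal Loc Prim Fld RTag)) : stackTags (x :: S) = stackTags S := by
  ext t
  simp only [stackTags, Set.mem_setOf_eq, List.mem_cons]
  constructor
  · rintro ⟨tv', (h | h), hp⟩
    · exact absurd rfl (h ▸ hx tv')
    · exact ⟨tv', h, hp⟩
  · rintro ⟨tv', h, hp⟩
    exact ⟨tv', Or.inr h, hp⟩

lemma stackTags_cons_ref (r : MRef Loc Fld) (S : List (SVal Loc Prim Fld RTag)) :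
    stackTags (SV.ref r :: S) = stackTags S :=
  stackTags_cons_ne _ (fun tv h => by simp [SV.ref, SV.tv] at h) S

lemma stackTags_cons_loc (c : Loc) (S : List (SVal Loc Prim Fld RTag)) :
    stackTags (SV.loc c :: S) = stackTags S :=
  stackTags_cons_ne _ (fun tv h => by simp [SV.loc, SV.tv] at h) S

lemma stackTags_cons_nores {tv : TVal Prim Fld RTag} (h : NoRes tv)
    (S : List (SVal Loc Prim Fld RTag)) :
    stackTags (SV.tv tv :: S) = stackTags S := by
  rw [stackTags_cons_tv, tvTags_empty h, Set.empty_union]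

lemma noRes_prim_U (a : Prim) : NoRes ((Val.prim a, MTag.U) : TVal Prim Fld RTag) := by
  rintro (_ | ⟨f, p⟩) v t h
  · rw [subTV_nil] at h; cases h
  · rw [subTV_cons_prim] at h; cases h

lemma stackTags_prims (vs : List Prim) (S : List (SVal Loc Prim Fld RTag)) :
    stackTags ((vs.map fun v => SV.tv ((Val.prim v, MTag.U) : TVal Prim Fld RTag)) ++ S)
      = stackTags S := by
  induction vs with
  | nil => rfl
  | cons v vs ih =>
    rw [List.map_cons, List.cons_append, stackTags_cons_nores (noRes_prim_U v), ih]

variable [DecidableEq Loc]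

lemma memTags_upd_none {M : Loc → Option (TVal Prim Fld RTag)} {c : Loc}
    {tv : TVal Prim Fld RTag} (h : M c = some tv) :
    memTags M = memTags (upd M c none) ∪ tvTags tv := by
  ext t
  simp only [memTags, tvTags, Set.mem_setOf_eq, Set.mem_union]
  constructor
  · rintro ⟨c', tv', p, v, h1, h2⟩
    by_cases hc : c' = c
    · subst hc
      rw [h] at h1
      cases h1
      exact Or.inr ⟨p, v, h2⟩
    · exact Or.inl ⟨c', tv', p, v, by rw [upd, if_neg hc]; exact h1, h2⟩
  · rintro (⟨c', tv', p, v, h1, h2⟩ | ⟨p, v, h2⟩)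
    · by_cases hc : c' = c
      · rw [upd, if_pos hc] at h1; cases h1
      · rw [upd, if_neg hc] at h1
        exact ⟨c', tv', p, v, h1, h2⟩
    · exact ⟨c, tv, p, v, h, h2⟩

lemma memTags_upd_some {M : Loc → Option (TVal Prim Fld RTag)} {c : Loc}
    (h : M c = none) (tv : TVal Prim Fld RTag) :
    memTags (upd M c (some tv)) = memTags M ∪ tvTags tv := by
  ext t
  simp only [memTags, tvTags, Set.mem_setOf_eq, Set.mem_union]
  constructor
  · rintro ⟨c', tv', p, v, h1, h2⟩
    by_cases hc : c' = c
    · subst hc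
      rw [upd, if_pos rfl] at h1
      cases h1
      exact Or.inr ⟨p, v, h2⟩
    · rw [upd, if_neg hc] at h1
      exact Or.inl ⟨c', tv', p, v, h1, h2⟩
  · rintro (⟨c', tv', p, v, h1, h2⟩ | ⟨p, v, h2⟩)
    · have hc : c' ≠ c := fun hh => by rw [hh, h] at h1; cases h1
      exact ⟨c', tv', p, v, by rw [upd, if_neg hc]; exact h1, h2⟩
    · exact ⟨c, tv, p, v, by rw [upd, if_pos rfl], h2⟩

lemma memTags_upd_replace {M : Loc → Option (TVal Prim Fld RTag)} {c : Loc}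
    {tv tv2 : TVal Prim Fld RTag} (h : M c = some tv) (htags : tvTags tv2 = tvTags tv) :
    memTags (upd M c (some tv2)) = memTags M := by
  ext t
  simp only [memTags, Set.mem_setOf_eq]
  constructor
  · rintro ⟨c', tv', p, v, h1, h2⟩
    by_cases hc : c' = c
    · subst hc
      rw [upd, if_pos rfl] at h1
      cases h1
      have : t ∈ tvTags tv := htags ▸ ⟨p, v, h2⟩
      obtain ⟨p', v', h3⟩ := this
      exact ⟨c', tv, p', v', h, h3⟩
    · rw [upd, if_neg hc] at h1
      exact ⟨c', tv', p, v, h1, h2⟩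
  · rintro ⟨c', tv', p, v, h1, h2⟩
    by_cases hc : c' = c
    · subst hc
      rw [h] at h1
      cases h1
      have : t ∈ tvTags tv2 := htags ▸ ⟨p, v, h2⟩
      obtain ⟨p', v', h3⟩ := this
      exact ⟨c', tv2, p', v', by rw [upd, if_pos rfl], h3⟩
    · exact ⟨c', tv', p, v, by rw [upd, if_neg hc]; exact h1, h2⟩

end Aux4
section Aux5

variable [DecidableEq Fld]

lemma tvTags_setSub {p : List Fld} {tv tvold tvnew tv2 : TVal Prim Fld RTag}
    (hsub : subTV tv p = some tvold) (hset : setSubTV tv p tvnew = some tv2)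
    (hold : NoRes tvold) (hnew : NoRes tvnew) : tvTags tv2 = tvTags tv := by
  ext t
  simp only [tvTags, Set.mem_setOf_eq]
  constructor
  · rintro ⟨q, v, h⟩
    rcases setSub_res_forward p tv tvnew tv2 hset q v t h with ⟨q', v', _, h'⟩ | ⟨v', h'⟩
    · exact absurd h' (hnew q' v' t)
    · exact ⟨q, v', h'⟩
  · rintro ⟨q, v, h⟩
    rcases setSub_res_backward p tv tvold tvnew tv2 hsub hset q v t h with
      ⟨q', v', _, h'⟩ | ⟨v', h'⟩
    · exact absurd h' (hold q' v' t)
    · exact ⟨q, v', h'⟩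

end Aux5
/-- **Resource invariance of non-Pack/Unpack steps**: a single program step whose
operation is neither `Pack` nor `Unpack` (including `Branch` steps) leaves the set
of resources of a well-formed state unchanged. -/
theorem non_pack_unpack_step_resources_eq {Loc Prim Var Fld RTag Ty : Type}
    [DecidableEq Loc] [DecidableEq Prim] [DecidableEq Var] [DecidableEq Fld] [DecidableEq Ty]
    [Countable Loc] [Countable Prim] [Countable Var] [Countable RTag] [Finite Fld]
    (typeOf : Val Prim Fld RTag → Ty) (ResTy : Set Ty) (Addr : Set Prim)
    (boolP : Bool → Prim) (P : ℕ → Op Prim Var Fld Ty)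
    {pc pc' : ℕ} {σ σ' : MState Loc Prim Var Fld RTag Ty}
    (hwf : WFState typeOf ResTy σ)
    (hstep : PStep typeOf ResTy Addr boolP P (pc, σ) (pc', σ'))
    (hnotpack : ∀ s : Ty, P pc ≠ Op.Pack s)
    (hnotunpack : ∀ s : Ty, P pc ≠ Op.Unpack s) :
    resources σ' = resources σ := by
  cases hstep with
  | branch_t h hb => rw [resources_eq, resources_eq, stackTags_cons_loc]
  | branch_f h hb => rw [resources_eq, resources_eq, stackTags_cons_loc]
  | exec h hs =>
    cases hs with
    | pack_r h1 h2 h3 h4 h5 => exact absurd h (hnotpack _)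
    | pack_u h1 h2 h3 h4 h5 => exact absurd h (hnotpack _)
    | unpack => exact absurd h (hnotunpack _)
    | @mvloc_loc M G L S x c tv h1 h2 =>
      rw [resources_eq, resources_eq, stackTags_cons_tv, memTags_upd_none h2,
        Set.union_assoc]
    | mvloc_ref h1 => rw [resources_eq, resources_eq, stackTags_cons_ref]
    | @cploc_loc M G L S x c v h1 h2 =>
      rw [resources_eq, resources_eq,
        stackTags_cons_nores (wf_U_noRes' (hwf.gc.wf_mem c _ h2))]
    | cploc_ref h1 => rw [resources_eq, resources_eq, stackTags_cons_ref]
    | @stloc_tv M G L S x tv c' h1 h2 =>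
      rw [resources_eq, resources_eq, stackTags_cons_tv, memTags_upd_some h2,
        Set.union_assoc]
    | stloc_ref h1 => rw [resources_eq, resources_eq, stackTags_cons_ref]
    | borrowloc h1 => rw [resources_eq, resources_eq, stackTags_cons_ref]
    | borrowfield h1 h2 h3 =>
      rw [resources_eq, resources_eq, stackTags_cons_ref, stackTags_cons_ref]
    | freezeref =>
      rw [resources_eq, resources_eq, stackTags_cons_ref, stackTags_cons_ref]
    | @readref M G L S c p q tv v h1 h2 =>
      rw [resources_eq, resources_eq, stackTags_cons_ref,
        stackTags_cons_nores (wf_U_noRes' (wf_sub p tv _ (hwf.gc.wf_mem c _ h1) h2))]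
    | @writeref M G L S c p tv v v' tv2 h1 h2 h3 =>
      have hnew : NoRes ((v', MTag.U) : TVal Prim Fld RTag) :=
        wf_U_noRes' (hwf.gc.wf_stack _ (List.mem_cons_self))
      have hold : NoRes ((v, MTag.U) : TVal Prim Fld RTag) :=
        wf_U_noRes' (wf_sub p tv _ (hwf.gc.wf_mem c _ h1) h2)
      rw [resources_eq, resources_eq, stackTags_cons_nores hnew, stackTags_cons_ref,
        memTags_upd_replace h1 (tvTags_setSub h2 h3 hold hnew)]
    | @pop_tv M G L S v =>
      rw [resources_eq, resources_eq,
        stackTags_cons_nores (wf_U_noRes' (hwf.gc.wf_stack _ (List.mem_cons_self)))]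
    | pop_ref => rw [resources_eq, resources_eq, stackTags_cons_ref]
    | loadconst => rw [resources_eq, resources_eq, stackTags_cons_nores (noRes_prim_U _)]
    | stackop h1 h2 =>
      rw [resources_eq, resources_eq, stackTags_cons_nores (noRes_prim_U _),
        stackTags_prims]
    | @moveto M G L S a v t s c h1 h2 h3 h4 h5 =>
      rw [resources_eq, resources_eq, stackTags_cons_nores (noRes_prim_U _),
        stackTags_cons_tv, memTags_upd_some h5, Set.union_assoc]
    | @movefrom M G L S a s c tv' h1 h2 h3 h4 =>
      rw [resources_eq, resources_eq, stackTags_cons_tv, memTags_upd_none h4,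
        stackTags_cons_nores (noRes_prim_U _), Set.union_assoc]
    | borrowglobal h1 h2 h3 =>
      rw [resources_eq, resources_eq, stackTags_cons_ref,
        stackTags_cons_nores (noRes_prim_U _)]
    | existsg h1 h2 =>
      rw [resources_eq, resources_eq, stackTags_cons_nores (noRes_prim_U _),
        stackTags_cons_nores (noRes_prim_U _)]

end MoveSem
end
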